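/- arXiv:2212.12477 — 7 statements merged into one kernel-verified Lean document; each statement's English description precedes it below -/
import Mathlib

section
/- If λ is a t-core partition of length at most tn, then the Frobenius rank of λ equals the sum over i from 0 to t-1 of max(n_i(λ) - n, 0), where n_i(λ) is the number of parts of β(λ, tn) congruent to i mod t. -/
open Finset

/-- `l` is a partition of length at most `m`: antitone with all parts beyond `m` zero. -/
def PartLen (l : ℕ → ℕ) (m : ℕ) : Prop := Antitone l ∧ ∀ i, m ≤ i → l i = 0

/-- The beta-set `β(λ, m)` with parts `λ_i + m - i` (1-indexed), as a finset. -/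
def betaSet (l : ℕ → ℕ) (m : ℕ) : Finset ℕ := (Finset.range m).image (fun i => l i + (m - 1 - i))

/-- `n_i(λ)`: number of parts of the beta-set `β(λ, m)` congruent to `i` modulo `t`. -/
def nP (l : ℕ → ℕ) (m t : ℕ) (i : ℤ) : ℕ :=
  ((Finset.range m).filter
    (fun j => ((l j + (m - 1 - j) : ℕ) : ℤ) % (t : ℤ) = i % (t : ℤ))).card

/-- Macdonald's beta-set of the `t`-core of `λ`: the numbers `t*j + i` for `j < n_i(λ)`. -/
def coreBetaSet (l : ℕ → ℕ) (m t : ℕ) : Finset ℕ :=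
  (Finset.range t).biUnion (fun i => (Finset.range (nP l m t i)).image (fun j => t * j + i))

/-- `λ` is a `t`-core iff its beta-set is already the beta-set of its `t`-core. -/
def IsTCore (l : ℕ → ℕ) (m t : ℕ) : Prop := betaSet l m = coreBetaSet l m t

/-- The `t`-core of `λ` (with `m` beta-numbers), via Macdonald's construction. -/
def tCore (l : ℕ → ℕ) (m t : ℕ) : ℕ → ℕ := fun i =>
  if i < m then ((coreBetaSet l m t).sort (· ≤ ·)).getD (m - 1 - i) 0 - (m - 1 - i) else 0

/-- Part `j+1` of the conjugate partition of `l` (length at most `m`). -/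
def conj (l : ℕ → ℕ) (m j : ℕ) : ℕ := ((Finset.range m).filter (fun i => j + 1 ≤ l i)).card

/-- The Frobenius rank: the number of `i` with `λ_i ≥ i` (1-indexed). -/
def frobRank (l : ℕ → ℕ) (m : ℕ) : ℕ := ((Finset.range m).filter (fun i => i + 1 ≤ l i)).card

/-- First Frobenius coordinate `α_{j+1} = λ_{j+1} - (j+1)`. -/
def fA (l : ℕ → ℕ) (j : ℕ) : ℤ := (l j : ℤ) - (j + 1)

/-- Second Frobenius coordinate `β_{j+1} = λ'_{j+1} - (j+1)`. -/
def fB (l : ℕ → ℕ) (m j : ℕ) : ℤ := (conj l m j : ℤ) - (j + 1)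

/-- `λ` is `(z₁, z₂, k)`-asymmetric: in Frobenius coordinates,
`λ = (α_1,…,α_r | α_1+z₁, …, (α_k+z₁ omitted), …, α_r+z₁, z₂)`; for `k = 0` no part is
omitted and no part (`z₂`) is added. -/
def IsAsym (l : ℕ → ℕ) (m : ℕ) (z1 z2 : ℤ) (k : ℕ) : Prop :=
  k ≤ frobRank l m ∧
  (if k = 0 then ∀ j < frobRank l m, fB l m j = fA l j + z1
   else (∀ j : ℕ, j + 1 < k → fB l m j = fA l j + z1) ∧
        (∀ j : ℕ, k ≤ j + 1 → j + 2 ≤ frobRank l m → fB l m j = fA l (j + 1) + z1) ∧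
        1 ≤ frobRank l m ∧ fB l m (frobRank l m - 1) = z2)

/-! The beta-number `λ_i + m - i` is at least `m` exactly when `λ_i ≥ i`, and beta-numbers are
distinct, so the Frobenius rank counts the beta-numbers `≥ m`. For a `t`-core with `m = tn`
the beta-numbers on runner `i` are `i, i + t, …, i + t (n_i - 1)`, and exactly `n_i - n` of
them are `≥ tn`. -/

lemma strictAntiOn_betaNumber {l : ℕ → ℕ} (hl : Antitone l) (m : ℕ) :
    StrictAntiOn (fun i => l i + (m - 1 - i)) (Set.Iio m) := by
  intro a ha b hb hab
  have := hl hab.le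
  simp only [Set.mem_Iio] at ha hb ⊢
  omega

lemma frobRank_eq_card_filter_betaSet {l : ℕ → ℕ} (hl : Antitone l) (m : ℕ) :
    frobRank l m = #{x ∈ betaSet l m | m ≤ x} := by
  rw [betaSet, filter_image, card_image_of_injOn, frobRank]
  · refine congrArg card (filter_congr fun i hi => ?_)
    rw [mem_range] at hi
    omega
  · exact (strictAntiOn_betaNumber hl m).injOn.mono
      fun x hx => mem_range.mp (mem_filter.mp hx).1

lemma mul_le_mul_add_iff {t i : ℕ} (hi : i < t) (n j : ℕ) : t * n ≤ t * j + i ↔ n ≤ j := by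
  have ht : 0 < t := by omega
  rw [mul_comm, ← Nat.le_div_iff_mul_le ht, Nat.mul_add_div ht, Nat.div_eq_of_lt hi, add_zero]

lemma card_filter_le_image_mul_add {t i : ℕ} (hi : i < t) (N n : ℕ) :
    #{x ∈ (range N).image (fun j => t * j + i) | t * n ≤ x} = N - n := by
  have hinj : Set.InjOn (fun j => t * j + i) (range N) := fun a _ b _ hab =>
    Nat.eq_of_mul_eq_mul_left (by omega : 0 < t) (Nat.add_right_cancel hab)
  rw [filter_image, card_image_of_injOn (hinj.mono (filter_subset _ _))]
  have hIco : {j ∈ range N | t * n ≤ t * j + i} = Ico n N := by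
    ext j
    simp only [mem_filter, mem_range, mem_Ico, mul_le_mul_add_iff hi]
    tauto
  rw [hIco, Nat.card_Ico]

lemma card_filter_le_coreBetaSet (l : ℕ → ℕ) (m t n : ℕ) :
    #{x ∈ coreBetaSet l m t | t * n ≤ x} = ∑ i ∈ range t, (nP l m t i - n) := by
  rw [coreBetaSet, filter_biUnion, card_biUnion]
  · refine sum_congr rfl fun i hi => ?_
    exact card_filter_le_image_mul_add (mem_range.mp hi) _ n
  · intro i hi i' hi' hne
    refine disjoint_left.mpr fun x hx hx' => hne ?_
    simp only [mem_filter, mem_image] at hx hx'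
    obtain ⟨⟨j, -, rfl⟩, -⟩ := hx
    obtain ⟨⟨j', -, hj'⟩, -⟩ := hx'
    have hmod := congrArg (· % t) hj'
    simp only [mul_comm t, Nat.mul_add_mod_of_lt (mem_range.mp hi),
      Nat.mul_add_mod_of_lt (mem_range.mp hi')] at hmod
    exact hmod.symm

theorem frobRank_tcore_tn_general (t n : ℕ) (l : ℕ → ℕ)
    (hl : PartLen l (t * n)) (hcore : IsTCore l (t * n) t) :
    frobRank l (t * n) = ∑ i ∈ Finset.range t, (nP l (t * n) t i - n) := by
  rw [frobRank_eq_card_filter_betaSet hl.1, hcore, card_filter_le_coreBetaSet]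

/-- rank of a `t`-core of length at most `tn`. -/
theorem frobRank_tcore_tn (t n : ℕ) (ht : 2 ≤ t) (hn : 1 ≤ n) (l : ℕ → ℕ)
    (hl : PartLen l (t * n)) (hcore : IsTCore l (t * n) t) :
    frobRank l (t * n) = ∑ i ∈ Finset.range t, (nP l (t * n) t i - n) :=
  frobRank_tcore_tn_general t n l hl hcore
end

section
/- For n ≥ 1 and variables x_1,...,x_{n+1} with x̄ = 1/x: det_{1≤i,j≤n+1}(x_i^{n+2-j} - x̄_i^{n+2-j}) = (-1)^n x_{n+1}^{-n} (x_{n+1} - x̄_{n+1}) ∏_{i=1}^n (x_i - x_{n+1})(x̄_i - x_{n+1}) · det_{1≤i,j≤n}(x_i^{n+1-j} - x̄_i^{n+1-j}). -/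
/-!
Write `f_m(t) = t ^ m - t⁻¹ ^ m`, so that `f_{m+2} - c f_{m+1} + f_m = (t + t⁻¹ - c) f_{m+1}`.
With `a = x_{n+1}` and `c = a + a⁻¹`, replace every column `j` by
`col j - c • col (j+1) + col (j+2)`; this is right multiplication by the unitriangular matrix
`1 - c S + S²` (`S` the lower shift), so the determinant does not change. Afterwards the last row
vanishes except for its last entry `a - a⁻¹`, and row `i` of the complementary minor is
`x_i + x_i⁻¹ - a - a⁻¹ = -a⁻¹ (x_i - a)(x_i⁻¹ - a)` times the corresponding row of the smaller
determinant.
-/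

namespace Matrix

def lowerShift (R : Type*) [Zero R] [One R] (n : ℕ) : Matrix (Fin n) (Fin n) R :=
  of fun i j => if (i : ℕ) = j + 1 then 1 else 0

section lowerShift

variable {R : Type*} {n : ℕ}

theorem lowerShift_apply_of_le [Zero R] [One R] {i j : Fin n} (h : (i : ℕ) ≤ j) :
    lowerShift R n i j = 0 :=
  if_neg (by omega)

theorem isLowerTriangular_lowerShift [Zero R] [One R] : (lowerShift R n).IsLowerTriangular :=
  fun _ _ h => lowerShift_apply_of_le h.le

theorem of_mul_lowerShift [NonAssocSemiring R] {ι : Type*} (h : ι → ℕ → R)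
    (hn : ∀ i, h i n = 0) :
    (of fun i (j : Fin n) => h i j) * lowerShift R n = of fun i (j : Fin n) => h i (j + 1) := by
  ext i j
  rw [mul_apply]
  by_cases hj : (j : ℕ) + 1 < n
  · rw [Finset.sum_eq_single ⟨j + 1, hj⟩]
    · simp [lowerShift]
    · intro k _ hk
      simp only [lowerShift, of_apply, mul_ite, mul_one, mul_zero]
      exact if_neg fun h => hk (Fin.ext h)
    · simp
  · have hj : (j : ℕ) + 1 = n := by omega
    simp only [lowerShift, of_apply, mul_ite, mul_one, mul_zero, hj, hn]
    exact Finset.sum_eq_zero fun k _ => if_neg (by omega)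

theorem det_one_sub_smul_lowerShift_add_mul_self [CommRing R] (c : R) :
    det (1 - c • lowerShift R n + lowerShift R n * lowerShift R n) = 1 := by
  have hS := isLowerTriangular_lowerShift (R := R) (n := n)
  have hV : (1 - c • lowerShift R n + lowerShift R n * lowerShift R n).IsLowerTriangular :=
    fun i j hij => by simp [blockTriangular_one hij, hS hij, hS.mul hS hij]
  rw [det_of_isLowerTriangular _ hV]
  refine Finset.prod_eq_one fun i _ => ?_
  have hsq : (lowerShift R n * lowerShift R n) i i = 0 := by
    rw [mul_apply]
    refine Finset.sum_eq_zero fun k _ => ?_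
    rcases le_or_gt (i : ℕ) k with h | h
    · rw [lowerShift_apply_of_le h, zero_mul]
    · rw [lowerShift_apply_of_le h.le, mul_zero]
  simp [hsq, lowerShift_apply_of_le le_rfl]

theorem det_of_eq_det_of_three_term_columns [CommRing R] (h : Fin (n + 1) → ℕ → R) (c : R)
    (hn₁ : ∀ i, h i (n + 1) = 0) (hn₂ : ∀ i, h i (n + 2) = 0) :
    det (of fun i (j : Fin (n + 1)) => h i j) =
      det (of fun i (j : Fin (n + 1)) => h i j - c * h i (j + 1) + h i (j + 2)) := by
  set A : Matrix (Fin (n + 1)) (Fin (n + 1)) R := of fun i j => h i j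
  set S := lowerShift R (n + 1)
  have hAS : A * S = of fun i (j : Fin (n + 1)) => h i (j + 1) := of_mul_lowerShift h hn₁
  have hASS : (of fun i (j : Fin (n + 1)) => h i (j + 1)) * S =
      of fun i (j : Fin (n + 1)) => h i (j + 1 + 1) :=
    of_mul_lowerShift (fun i k => h i (k + 1)) hn₂
  calc det A = det (A * (1 - c • S + S * S)) := by
        rw [det_mul, det_one_sub_smul_lowerShift_add_mul_self, mul_one]
    _ = _ := by
        rw [mul_add, mul_sub, mul_one, Matrix.mul_smul, ← Matrix.mul_assoc, hAS, hASS]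
        rfl

theorem det_succ_eq_mul_det_of_last_row [CommRing R] (A : Matrix (Fin (n + 1)) (Fin (n + 1)) R)
    (h : ∀ j : Fin n, A (Fin.last n) j.castSucc = 0) :
    A.det = A (Fin.last n) (Fin.last n) * (A.submatrix Fin.castSucc Fin.castSucc).det := by
  rw [det_succ_row A (Fin.last n), Fin.sum_univ_castSucc]
  simp [h, Fin.succAbove_last, ← two_mul, pow_mul]

end lowerShift

end Matrix

open Matrix

section PowSubInvPow

variable {F : Type*} [Field F]

theorem pow_sub_inv_pow_add_two (t : F) (ht : t ≠ 0) (m : ℕ) :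
    t ^ (m + 2) - t⁻¹ ^ (m + 2) =
      (t + t⁻¹) * (t ^ (m + 1) - t⁻¹ ^ (m + 1)) - (t ^ m - t⁻¹ ^ m) := by
  linear_combination (t⁻¹ ^ m - t ^ m) * mul_inv_cancel₀ ht

theorem pow_sub_inv_pow_three_term (t c : F) (ht : t ≠ 0) {n j : ℕ} (hj : j < n) :
    t ^ (n + 1 - j) - t⁻¹ ^ (n + 1 - j)
        - c * (t ^ (n + 1 - (j + 1)) - t⁻¹ ^ (n + 1 - (j + 1)))
        + (t ^ (n + 1 - (j + 2)) - t⁻¹ ^ (n + 1 - (j + 2))) =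
      (t + t⁻¹ - c) * (t ^ (n - j) - t⁻¹ ^ (n - j)) := by
  obtain ⟨m, rfl⟩ := Nat.exists_eq_add_of_lt hj
  have e₀ : j + m + 1 + 1 - j = m + 2 := by omega
  have e₁ : j + m + 1 + 1 - (j + 1) = m + 1 := by omega
  have e₂ : j + m + 1 + 1 - (j + 2) = m := by omega
  have e₃ : j + m + 1 - j = m + 1 := by omega
  rw [e₀, e₁, e₂, e₃, pow_sub_inv_pow_add_two t ht]
  ring

theorem add_inv_sub_add_inv (t a : F) (ht : t ≠ 0) (ha : a ≠ 0) :
    t + t⁻¹ - (a + a⁻¹) = -a⁻¹ * ((t - a) * (t⁻¹ - a)) := by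
  linear_combination (a - t - t⁻¹) * mul_inv_cancel₀ ha + a⁻¹ * mul_inv_cancel₀ ht

theorem det_pow_sub_inv_pow_succ {n : ℕ} (x : Fin (n + 1) → F) (hx : ∀ i, x i ≠ 0) :
    det (of fun i j : Fin (n + 1) => x i ^ (n + 1 - (j : ℕ)) - (x i)⁻¹ ^ (n + 1 - (j : ℕ))) =
      (x (Fin.last n) - (x (Fin.last n))⁻¹) *
        ((∏ i : Fin n,
            (x i.castSucc + (x i.castSucc)⁻¹ - (x (Fin.last n) + (x (Fin.last n))⁻¹))) *
          det (of fun i j : Fin n =>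
            x i.castSucc ^ (n - (j : ℕ)) - (x i.castSucc)⁻¹ ^ (n - (j : ℕ)))) := by
  -- The phantom columns `n + 1` and `n + 2` get exponent `0` by truncated subtraction.
  have hpow_zero {k : ℕ} (hk : n + 1 ≤ k) (i) : x i ^ (n + 1 - k) - (x i)⁻¹ ^ (n + 1 - k) = 0 := by
    rw [Nat.sub_eq_zero_of_le hk, pow_zero, pow_zero, sub_self]
  rw [det_of_eq_det_of_three_term_columns (fun i k => x i ^ (n + 1 - k) - (x i)⁻¹ ^ (n + 1 - k))
      (x (Fin.last n) + (x (Fin.last n))⁻¹) (hpow_zero le_rfl) (hpow_zero (by omega)),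
    det_succ_eq_mul_det_of_last_row]
  · rw [← det_mul_column]
    congr 1
    · simp
    · congr 1
      ext i j
      exact pow_sub_inv_pow_three_term _ _ (hx _) j.isLt
  · intro j
    rw [of_apply, Fin.val_castSucc, pow_sub_inv_pow_three_term _ _ (hx _) j.isLt, sub_self,
      zero_mul]

end PowSubInvPow

theorem det_sub_pow_succ_general {F : Type*} [Field F] (n : ℕ)
    (x : Fin (n + 1) → F) (hx : ∀ i, x i ≠ 0) :
    Matrix.det (Matrix.of fun i j : Fin (n + 1) =>
        x i ^ (n + 1 - (j : ℕ)) - (x i)⁻¹ ^ (n + 1 - (j : ℕ))) =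
      (-1) ^ n * ((x (Fin.last n))⁻¹) ^ n * (x (Fin.last n) - (x (Fin.last n))⁻¹) *
        (∏ i : Fin n, ((x i.castSucc - x (Fin.last n)) * ((x i.castSucc)⁻¹ - x (Fin.last n)))) *
        Matrix.det (Matrix.of fun i j : Fin n =>
          x i.castSucc ^ (n - (j : ℕ)) - (x i.castSucc)⁻¹ ^ (n - (j : ℕ))) := by
  rw [det_pow_sub_inv_pow_succ x hx,
    Finset.prod_congr rfl fun i _ => add_inv_sub_add_inv _ _ (hx i.castSucc) (hx (Fin.last n)),
    Finset.prod_mul_distrib, Finset.prod_const, Finset.card_univ, Fintype.card_fin, neg_pow]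
  ring

/-- Krattenthaler: determinant identity for `det(x_i^{n+2-j} - x̄_i^{n+2-j})`.
Indices are 0-indexed: the `(i,j)` entry of the big matrix is `x_i^{n+1-j} - x̄_i^{n+1-j}`
(for `j = 0,…,n`), matching the 1-indexed exponent `n+2-j`. -/
theorem det_sub_pow_succ {F : Type*} [Field F] (n : ℕ) (hn : 1 ≤ n)
    (x : Fin (n + 1) → F) (hx : ∀ i, x i ≠ 0) :
    Matrix.det (Matrix.of fun i j : Fin (n + 1) =>
        x i ^ (n + 1 - (j : ℕ)) - (x i)⁻¹ ^ (n + 1 - (j : ℕ))) =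
      (-1) ^ n * ((x (Fin.last n))⁻¹) ^ n * (x (Fin.last n) - (x (Fin.last n))⁻¹) *
        (∏ i : Fin n, ((x i.castSucc - x (Fin.last n)) * ((x i.castSucc)⁻¹ - x (Fin.last n)))) *
        Matrix.det (Matrix.of fun i j : Fin n =>
          x i.castSucc ^ (n - (j : ℕ)) - (x i.castSucc)⁻¹ ^ (n - (j : ℕ))) :=
  det_sub_pow_succ_general n x hx
end

section
/- For n ≥ 1 and nonzero variables x_1,...,x_{n+1} with x̄ = 1/x: det_{1≤i,j≤n+1}(x_i^{n+1-j} + x̄_i^{n+1-j}) = (-1)^n x_{n+1}^{-n} ∏_{i=1}^n (x_i - x_{n+1})(x̄_i - x_{n+1}) · det_{1≤i,j≤n}(x_i^{n-j} + x̄_i^{n-j}). -/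
/-!
With `t = x + x⁻¹` one has `x ^ k + x⁻¹ ^ k = D_k(t)` for the Dickson polynomial
`D_k = dickson 1 1 k`, which has degree `k`, is monic for `k ≥ 1`, and equals `2` for `k = 0`.
Column operations therefore turn `det (x_i ^ (m-1-j) + x_i⁻¹ ^ (m-1-j))` into twice the
Vandermonde determinant of the `t_i`. Passing from `n` to `n + 1` variables multiplies it by
`∏ j (t_j - t_{n+1})`, and `t_j - t_{n+1} = -x_{n+1}⁻¹ (x_j - x_{n+1}) (x_j⁻¹ - x_{n+1})`.
-/

open Polynomial Finset Matrix

namespace Polynomial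

variable {R : Type*} [CommRing R] (k : ℕ) (a : R)

theorem natDegree_dickson_le : ∀ n, (dickson k a n).natDegree ≤ n
  | 0 => natDegree_sub_le_of_le (natDegree_ofNat 3).le (natDegree_natCast k).le
  | 1 => by simp [natDegree_X_le]
  | n + 2 => by
    rw [dickson_add_two]
    refine (natDegree_sub_le _ _).trans (max_le ?_ ?_)
    · exact natDegree_mul_le.trans (by grw [natDegree_X_le, natDegree_dickson_le (n + 1)]; omega)
    · exact (natDegree_C_mul_le _ _).trans ((natDegree_dickson_le n).trans (by omega))

theorem coeff_dickson_self : ∀ n, n ≠ 0 → (dickson k a n).coeff n = 1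
  | 1, _ => by simp
  | n + 2, _ => by
    have hlow : (dickson k a n).coeff (n + 2) = 0 :=
      coeff_eq_zero_of_natDegree_lt ((natDegree_dickson_le k a n).trans_lt (by omega))
    rw [dickson_add_two, coeff_sub, coeff_X_mul, coeff_C_mul, hlow,
      coeff_dickson_self (n + 1) (by omega)]
    simp

end Polynomial

namespace Matrix

variable {R : Type*} [CommRing R]

theorem det_eval_matrixOfPolynomials {n : ℕ} (v : Fin n → R) (p : Fin n → R[X])
    (h_deg : ∀ i, (p i).natDegree ≤ i) :
    (of fun i j => (p j).eval (v i)).det = (∏ i, (p i).coeff i) * (vandermonde v).det := by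
  rw [eval_matrixOfPolynomials_eq_vandermonde_mul_matrixOfPolynomials v p h_deg, det_mul,
    det_of_isUpperTriangular (matrixOfPolynomials_blockTriangular p h_deg), mul_comm]
  rfl

theorem det_eval_matrixOfPolynomials_rev {n : ℕ} (v : Fin n → R) (p : ℕ → R[X])
    (h_deg : ∀ k, (p k).natDegree ≤ k) :
    (of fun i j : Fin n => (p (n - 1 - j)).eval (v i)).det =
      (∏ k ∈ range n, (p k).coeff k) * ∏ i, ∏ j ∈ Iio i, (v j - v i) := by
  have hrev : (of fun i j : Fin n => (p (n - 1 - j)).eval (v i)) =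
      (of fun i j : Fin n => (p j).eval (v i.rev)).submatrix Fin.revPerm Fin.revPerm := by
    ext i j
    simp only [submatrix_apply, of_apply, Fin.revPerm_apply, Fin.rev_rev, Fin.val_rev]
    congr 2
    omega
  rw [hrev, det_submatrix_equiv_self, det_eval_matrixOfPolynomials _ (p ·) (fun i ↦ h_deg i),
    det_vandermonde, Fin.prod_univ_eq_prod_range (fun k ↦ (p k).coeff k)]
  congr 1
  refine Fintype.prod_equiv Fin.revPerm _ _ fun i ↦ ?_
  rw [Fin.revPerm_apply, ← Fin.map_revPerm_Ioi, prod_map]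
  rfl

end Matrix

theorem Fin.prod_prod_Iio_castSucc {M : Type*} [CommMonoid M] {n : ℕ}
    (f : Fin (n + 1) → Fin (n + 1) → M) :
    ∏ i, ∏ j ∈ Iio i, f j i =
      (∏ i : Fin n, ∏ j ∈ Iio i, f j.castSucc i.castSucc) * ∏ j : Fin n, f j.castSucc (.last n) := by
  simp only [Fin.prod_univ_castSucc, Fin.Iio_castSucc, Fin.Iio_last_eq_map, prod_map]
  rfl

theorem det_pow_add_pow_of_mul_eq_one {R : Type*} [CommRing R] {m : ℕ} (hm : m ≠ 0)
    (x y : Fin m → R) (hxy : ∀ i, x i * y i = 1) :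
    (of fun i j : Fin m => x i ^ (m - 1 - (j : ℕ)) + y i ^ (m - 1 - (j : ℕ))).det =
      2 * ∏ i, ∏ j ∈ Iio i, ((x j + y j) - (x i + y i)) := by
  have hdickson : (of fun i j : Fin m => x i ^ (m - 1 - (j : ℕ)) + y i ^ (m - 1 - (j : ℕ))) =
      of fun i j : Fin m => (dickson 1 (1 : R) (m - 1 - j)).eval (x i + y i) := by
    ext i j
    simp [dickson_one_one_eval_add_inv _ _ (hxy i)]
  rw [hdickson, det_eval_matrixOfPolynomials_rev _ _ (natDegree_dickson_le 1 1)]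
  obtain ⟨m, rfl⟩ := Nat.exists_eq_succ_of_ne_zero hm
  rw [prod_range_succ', prod_eq_one fun k _ ↦ coeff_dickson_self 1 1 (k + 1) k.succ_ne_zero]
  norm_num

/-- Krattenthaler: determinant identity for `det(x_i^{n+1-j} + x̄_i^{n+1-j})`.
Indices are 0-indexed: the `(i,j)` entry of the big matrix is `x_i^{n-j} + x̄_i^{n-j}`
(for `j = 0,…,n`), matching the 1-indexed exponent `n+1-j`. -/
theorem det_add_pow {F : Type*} [Field F] (n : ℕ) (hn : 1 ≤ n)
    (x : Fin (n + 1) → F) (hx : ∀ i, x i ≠ 0) :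
    Matrix.det (Matrix.of fun i j : Fin (n + 1) =>
        x i ^ (n - (j : ℕ)) + (x i)⁻¹ ^ (n - (j : ℕ))) =
      (-1) ^ n * ((x (Fin.last n))⁻¹) ^ n *
        (∏ i : Fin n, ((x i.castSucc - x (Fin.last n)) * ((x i.castSucc)⁻¹ - x (Fin.last n)))) *
        Matrix.det (Matrix.of fun i j : Fin n =>
          x i.castSucc ^ (n - 1 - (j : ℕ)) + (x i.castSucc)⁻¹ ^ (n - 1 - (j : ℕ))) := by
  have hinv i : x i * (x i)⁻¹ = 1 := mul_inv_cancel₀ (hx i)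
  have hfactor (i : Fin n) : (x i.castSucc + (x i.castSucc)⁻¹) - (x (.last n) + (x (.last n))⁻¹) =
      -(x (.last n))⁻¹ * ((x i.castSucc - x (.last n)) * ((x i.castSucc)⁻¹ - x (.last n))) := by
    field_simp [hx i.castSucc, hx (.last n)]
    ring
  have hbig := det_pow_add_pow_of_mul_eq_one n.succ_ne_zero x _ hinv
  rw [Nat.succ_sub_one] at hbig
  rw [hbig, det_pow_add_pow_of_mul_eq_one (by omega) (fun i ↦ x i.castSucc) _ fun i ↦ hinv _,
    Fin.prod_prod_Iio_castSucc, prod_congr rfl fun i _ ↦ hfactor i, prod_mul_distrib,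
    prod_const, card_univ, Fintype.card_fin]
  ring
end

section
/- Let k ≥ 1 and ℓ_1,...,ℓ_k, m_1,...,m_k be positive integers with 1 + ℓ_1 + ... + ℓ_k = m_1 + ... + m_k = d. Let S_i be a 1 × m_i matrix and T_i an ℓ_i × m_i matrix, and let U_k be the d × d matrix with first block row (S_1 | S_2 | ... | S_k) and below it the block-diagonal arrangement of T_1,...,T_k. (1) If there exists i_0 ∈ {1,...,k} with m_{i_0} = ℓ_{i_0} + 1 and m_j = ℓ_j for all j ≠ i_0, then det(U_k) = (-1)^{∑_{i < i_0} ℓ_i} · det(stack of S_{i_0} over T_{i_0}) · ∏_{i ≠ i_0} det(T_i). (2) Otherwise det(U_k) = 0. -/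
/-!
Expanding the top row multilinearly, `det U_k` is the sum over `j` of the determinants of the
matrices that keep only `S_j` in the top row. The entries of such a matrix vanish unless row and
column lie in blocks of the same index, the row blocks having sizes `ℓ_i + [i = j]` (the top row
joins block `j`) and the column blocks sizes `m_i`. A permutation contributing to the determinant
maps each column block into the row block of the same index, so the determinant vanishes unless
these sizes agree, which happens only for `j = i₀`. For `j = i₀`, moving the top row down past the
`∑_{i < i₀} ℓ_i` rows of the earlier blocks (a cycle of that sign) yields the block diagonal matrix
with diagonal blocks `T_i` for `i ≠ i₀` and the stack of `S_{i₀}` over `T_{i₀}` at `i₀`.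
-/

open Finset Matrix

def blockStart {k : ℕ} (a : Fin k → ℕ) (i : Fin k) : ℕ :=
  ∑ j ∈ univ.filter (· < i), a j

section blockStart

variable {k : ℕ} (a : Fin k → ℕ)

theorem blockStart_add_le {i i' : Fin k} (h : i < i') :
    blockStart a i + a i ≤ blockStart a i' := by
  rw [blockStart, blockStart, add_comm, ← sum_insert (by simp)]
  refine sum_le_sum_of_subset fun j hj => ?_
  simp only [mem_insert, mem_filter, mem_univ, true_and] at hj ⊢
  rcases hj with rfl | hj
  exacts [h, hj.trans h]

theorem blockStart_add_lt_iff {i i' : Fin k} {c : ℕ} (hc : c < a i) :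
    blockStart a i + c < blockStart a i' ↔ i < i' := by
  refine ⟨fun h => ?_, fun h => by have := blockStart_add_le a h; omega⟩
  rcases lt_trichotomy i i' with hlt | rfl | hgt
  · exact hlt
  · omega
  · have := blockStart_add_le a hgt; omega

theorem blockStart_add_inj {i i' : Fin k} {c c' : ℕ} (hc : c < a i) (hc' : c' < a i')
    (h : blockStart a i + c = blockStart a i' + c') : i = i' ∧ c = c' := by
  obtain rfl : i = i' := by
    by_contra hne
    rcases lt_or_gt_of_ne hne with hlt | hgt
    · have := (blockStart_add_lt_iff a hc).2 hlt; omega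
    · have := (blockStart_add_lt_iff a hc').2 hgt; omega
  exact ⟨rfl, by omega⟩

theorem blockStart_add_ite (i₀ i : Fin k) :
    blockStart (fun j => a j + if j = i₀ then 1 else 0) i =
      blockStart a i + if i₀ < i then 1 else 0 := by
  simp [blockStart, sum_add_distrib]

end blockStart

/-- The index `q` lies at offset `o q` in block `b q`, when `Fin n` is cut into consecutive blocks
of sizes `a 0, a 1, …`. -/
def IsBlockDecoding {k n : ℕ} (a : Fin k → ℕ) (b : Fin n → Fin k) (o : Fin n → ℕ) : Prop :=
  ∀ q, o q < a (b q) ∧ (q : ℕ) = blockStart a (b q) + o q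

namespace IsBlockDecoding

variable {k n : ℕ} {a : Fin k → ℕ} {b : Fin n → Fin k} {o : Fin n → ℕ}

theorem eq_of_val_eq (h : IsBlockDecoding a b o) {q : Fin n} {i : Fin k} {c : ℕ} (hc : c < a i)
    (hq : (q : ℕ) = blockStart a i + c) : b q = i ∧ o q = c :=
  blockStart_add_inj a (h q).1 hc ((h q).2.symm.trans hq)

theorem injective (h : IsBlockDecoding a b o) :
    Function.Injective fun q => (⟨b q, ⟨o q, (h q).1⟩⟩ : Σ i, Fin (a i)) := by
  intro q q' hqq'
  have hb : b q = b q' := congrArg Sigma.fst hqq'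
  have ho : o q = o q' := congrArg (fun x : Σ i, Fin (a i) => (x.2 : ℕ)) hqq'
  exact Fin.ext (by rw [(h q).2, (h q').2, hb, ho])

noncomputable def equiv (h : IsBlockDecoding a b o) (hn : ∑ i, a i = n) : Fin n ≃ Σ i, Fin (a i) :=
  Equiv.ofBijective _ ((Fintype.bijective_iff_injective_and_card _).2 ⟨h.injective, by simp [hn]⟩)

theorem equiv_apply (h : IsBlockDecoding a b o) (hn : ∑ i, a i = n) (q : Fin n) :
    h.equiv hn q = ⟨b q, ⟨o q, (h q).1⟩⟩ :=
  rfl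

theorem card_filter_eq (h : IsBlockDecoding a b o) (hn : ∑ i, a i = n) (i : Fin k) :
    #{q | b q = i} = a i := by
  rw [card_equiv (h.equiv hn) (t := {x | x.1 = i}) (by simp [equiv_apply]),
    ← Fintype.card_subtype, Fintype.card_congr (Equiv.sigmaSubtype i), Fintype.card_fin]

end IsBlockDecoding

namespace Matrix

variable {n R : Type*} [Fintype n] [DecidableEq n] [CommRing R]

theorem det_updateRow_finset_sum (A : Matrix n n R) (j : n) {ι : Type*} (s : Finset ι)
    (v : ι → n → R) : (A.updateRow j (∑ i ∈ s, v i)).det = ∑ i ∈ s, (A.updateRow j (v i)).det :=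
  detRowAlternating.map_update_sum s j v A

theorem det_eq_zero_of_card_filter_ne {ι : Type*} [DecidableEq ι] (M : Matrix n n R)
    (rowBlock colBlock : n → ι) (hM : ∀ p q, rowBlock p ≠ colBlock q → M p q = 0) {i : ι}
    (hi : #{p | rowBlock p = i} ≠ #{q | colBlock q = i}) : M.det = 0 := by
  rw [det_apply]
  refine sum_eq_zero fun σ _ => ?_
  by_cases hσ : ∀ q, rowBlock (σ q) = colBlock q
  · refine absurd (card_equiv σ fun q => ?_).symm hi
    simp [hσ]
  · push Not at hσ
    obtain ⟨q, hq⟩ := hσ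
    rw [prod_eq_zero (f := fun j => M (σ j) j) (mem_univ q) (hM _ _ hq), smul_zero]

theorem det_blockDiagonal' {ι : Type*} [Fintype ι] [LinearOrder ι] {β : ι → Type*}
    [∀ i, Fintype (β i)] [∀ i, DecidableEq (β i)] (B : ∀ i, Matrix (β i) (β i) R) :
    (blockDiagonal' B).det = ∏ i, (B i).det := by
  have hblock : ∀ i, ((blockDiagonal' B).toSquareBlock Sigma.fst i).det = (B i).det := by
    intro i
    rw [← det_submatrix_equiv_self (Equiv.sigmaSubtype i).symm]
    congr 1
    ext r c
    exact blockDiagonal'_apply_eq B i r c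
  rw [(blockTriangular_blockDiagonal' B).det, prod_congr rfl fun i _ => hblock i]
  refine prod_subset (subset_univ _) fun i _ hi => ?_
  have : IsEmpty (β i) := ⟨fun r => hi (mem_image.2 ⟨⟨i, r⟩, mem_univ _, rfl⟩)⟩
  exact det_isEmpty

theorem blockDiagonal'_of_apply {ι α : Type*} [DecidableEq ι] [Zero α] {a : ι → ℕ}
    (f : ι → ℕ → ℕ → α) (x y : Σ i, Fin (a i)) :
    blockDiagonal' (fun i => of fun r c : Fin (a i) => f i r c) x y =
      if x.1 = y.1 then f x.1 x.2 y.2 else 0 := by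
  obtain ⟨i, r⟩ := x
  obtain ⟨j, c⟩ := y
  by_cases h : i = j
  · subst h
    simp
  · simp [h, blockDiagonal'_apply_ne]

theorem det_of_congr_dim {a b : ℕ} (h : a = b) (f : ℕ → ℕ → R) :
    (of fun r c : Fin a => f r c).det = (of fun r c : Fin b => f r c).det := by
  subst h
  rfl

end Matrix

def blockRow {R : Type*} [Zero R] {k n : ℕ} (S : Fin k → ℕ → R) (cb : Fin n → Fin k)
    (co : Fin n → ℕ) (j : Fin k) : Fin n → R :=
  fun q => if cb q = j then S j (co q) else 0

section OneRowBlockMatrix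

variable {R : Type*} [CommRing R] {k d : ℕ} {ℓ m : Fin k → ℕ} {S : Fin k → ℕ → R}
  {T : Fin k → ℕ → ℕ → R} {cb : Fin (d + 1) → Fin k} {co : Fin (d + 1) → ℕ}
  {rb : Fin d → Fin k} {ro : Fin d → ℕ} {U : Matrix (Fin (d + 1)) (Fin (d + 1)) R}

theorem det_eq_sum_det_updateRow_blockRow (hU : ∀ q, U 0 q = S (cb q) (co q)) :
    U.det = ∑ j, (U.updateRow 0 (blockRow S cb co j)).det := by
  have hrow : U 0 = ∑ j, blockRow S cb co j := by
    funext q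
    simp [blockRow, hU]
  rw [← det_updateRow_finset_sum, ← hrow, updateRow_eq_self]

theorem det_updateRow_blockRow_eq_zero (hcol : IsBlockDecoding m cb co) (hm : ∑ i, m i = d + 1)
    (hrow : IsBlockDecoding ℓ rb ro) (hℓ : ∑ i, ℓ i = d)
    (hU : ∀ r q, rb r ≠ cb q → U r.succ q = 0) {i j : Fin k}
    (hij : m i ≠ ℓ i + if i = j then 1 else 0) :
    (U.updateRow 0 (blockRow S cb co j)).det = 0 := by
  refine det_eq_zero_of_card_filter_ne _ (Fin.cons j rb) cb (fun p q hpq => ?_) (i := i) ?_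
  · cases p using Fin.cases with
    | zero => simp [blockRow, Ne.symm (show j ≠ cb q from hpq)]
    | succ r => rw [updateRow_ne (Fin.succ_ne_zero r)]; exact hU r q hpq
  · rw [Fin.card_filter_univ_succ', hcol.card_filter_eq hm]
    simp only [Fin.cons_zero, Fin.cons_succ, hrow.card_filter_eq hℓ]
    split_ifs at hij ⊢ <;> omega

variable (i₀ : Fin k)

/-- Once the top row is moved down to position `blockStart ℓ i₀`, the row `r + 1` lands at the
position of the column with the same block and offset (shifted by one in block `i₀`). -/
theorem val_succAbove_eq_blockStart (hm : ∀ i, m i = ℓ i + if i = i₀ then 1 else 0)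
    (hrow : IsBlockDecoding ℓ rb ro) {L : Fin (d + 1)} (hL : (L : ℕ) = blockStart ℓ i₀)
    (r : Fin d) :
    (L.succAbove r : ℕ) = blockStart m (rb r) + (ro r + if rb r = i₀ then 1 else 0) := by
  obtain ⟨hro, hr⟩ := hrow r
  rw [show m = _ from funext hm, blockStart_add_ite]
  rcases lt_or_ge r.castSucc L with h | h
  · rw [Fin.succAbove_of_castSucc_lt _ _ h, Fin.val_castSucc]
    rw [Fin.lt_def, Fin.val_castSucc] at h
    have hlt : rb r < i₀ := (blockStart_add_lt_iff ℓ hro).1 (by omega)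
    rw [if_neg (not_lt_of_gt hlt), if_neg hlt.ne]
    omega
  · rw [Fin.succAbove_of_le_castSucc _ _ h, Fin.val_succ]
    rw [Fin.le_def, Fin.val_castSucc] at h
    have hle : i₀ ≤ rb r := not_lt.1 fun hlt => by
      have := (blockStart_add_lt_iff ℓ hro).2 hlt
      omega
    rcases hle.lt_or_eq with hlt | rfl
    · rw [if_pos hlt, if_neg hlt.ne']
      omega
    · rw [if_neg (lt_irrefl _), if_pos rfl]
      omega

def stackedBlockEntry (S : Fin k → ℕ → R) (T : Fin k → ℕ → ℕ → R) (i : Fin k) (r c : ℕ) : R :=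
  if i = i₀ then (if r = 0 then S i₀ c else T i₀ (r - 1) c) else T i r c

theorem updateRow_blockRow_eq_submatrix (hm : ∀ i, m i = ℓ i + if i = i₀ then 1 else 0)
    (hcol : IsBlockDecoding m cb co) (hmd : ∑ i, m i = d + 1) (hrow : IsBlockDecoding ℓ rb ro)
    {L : Fin (d + 1)} (hL : (L : ℕ) = blockStart ℓ i₀)
    (hU : ∀ r q, U r.succ q = if rb r = cb q then T (rb r) (ro r) (co q) else 0) :
    U.updateRow 0 (blockRow S cb co i₀) =
      ((blockDiagonal' fun i => of fun r c : Fin (m i) => stackedBlockEntry i₀ S T i r c).submatrix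
        (hcol.equiv hmd) (hcol.equiv hmd)).submatrix L.cycleRange.symm id := by
  ext p q
  cases p using Fin.cases with
  | zero =>
    have hL' : (L : ℕ) = blockStart m i₀ + 0 := by
      rw [show m = _ from funext hm, blockStart_add_ite]; simpa using hL
    obtain ⟨hb, ho⟩ := hcol.eq_of_val_eq (by simp [hm]) hL'
    simp only [submatrix_apply, id_eq, hcol.equiv_apply, blockDiagonal'_of_apply,
      Fin.cycleRange_symm_zero, hb, ho]
    simp [blockRow, stackedBlockEntry, eq_comm]
  | succ r =>
    have hbound : ro r + (if rb r = i₀ then 1 else 0) < m (rb r) := by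
      rw [hm]; have := (hrow r).1; split_ifs <;> omega
    obtain ⟨hb, ho⟩ := hcol.eq_of_val_eq hbound (val_succAbove_eq_blockStart i₀ hm hrow hL r)
    simp only [submatrix_apply, id_eq, hcol.equiv_apply, blockDiagonal'_of_apply,
      Fin.cycleRange_symm_succ, hb, ho, updateRow_ne (Fin.succ_ne_zero r), hU]
    by_cases h : rb r = i₀ <;> simp [stackedBlockEntry, h]

theorem det_updateRow_blockRow_self (hm : ∀ i, m i = ℓ i + if i = i₀ then 1 else 0)
    (hcol : IsBlockDecoding m cb co) (hrow : IsBlockDecoding ℓ rb ro) (hℓ : ∑ i, ℓ i = d)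
    (hU : ∀ r q, U r.succ q = if rb r = cb q then T (rb r) (ro r) (co q) else 0) :
    (U.updateRow 0 (blockRow S cb co i₀)).det =
      (-1) ^ blockStart ℓ i₀ * (of fun p q : Fin (ℓ i₀ + 1) =>
          if (p : ℕ) = 0 then S i₀ (q : ℕ) else T i₀ ((p : ℕ) - 1) (q : ℕ)).det *
        ∏ i ∈ univ.erase i₀, (of fun r c : Fin (ℓ i) => T i r c).det := by
  have hmd : ∑ i, m i = d + 1 := by simp [hm, sum_add_distrib, hℓ]
  have hL : blockStart ℓ i₀ < d + 1 :=
    Nat.lt_succ_of_le (hℓ ▸ sum_le_sum_of_subset (filter_subset _ _))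
  rw [updateRow_blockRow_eq_submatrix i₀ hm hcol hmd hrow (L := ⟨_, hL⟩) rfl hU, det_permute,
    det_submatrix_equiv_self, det_blockDiagonal', Equiv.Perm.sign_symm, Fin.sign_cycleRange,
    ← mul_prod_erase _ _ (mem_univ i₀), det_of_congr_dim (show m i₀ = ℓ i₀ + 1 by simp [hm])]
  have hT : ∀ i ∈ univ.erase i₀, (of fun r c : Fin (m i) => stackedBlockEntry i₀ S T i r c).det =
      (of fun r c : Fin (ℓ i) => T i r c).det := fun i hi => by
    have hi : i ≠ i₀ := ne_of_mem_erase hi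
    rw [det_of_congr_dim (show m i = ℓ i by simp [hm, hi])]
    simp [stackedBlockEntry, hi]
  rw [prod_congr rfl hT]
  simp [stackedBlockEntry, mul_assoc]

end OneRowBlockMatrix

theorem det_blockMatrix_one_row_general {R : Type*} [CommRing R] (k d : ℕ)
    (ℓ m : Fin k → ℕ)
    (hd1 : 1 + ∑ i, ℓ i = d) (hd2 : ∑ i, m i = d)
    (S : Fin k → ℕ → R) (T : Fin k → ℕ → ℕ → R)
    (cb : Fin d → Fin k) (co : Fin d → ℕ)
    (rb : Fin d → Fin k) (ro : Fin d → ℕ)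
    (hcol : ∀ q : Fin d, co q < m (cb q) ∧
      (q : ℕ) = (∑ i ∈ Finset.univ.filter (fun i => i < cb q), m i) + co q)
    (hrow : ∀ p : Fin d, (p : ℕ) ≠ 0 → ro p < ℓ (rb p) ∧
      (p : ℕ) = 1 + (∑ i ∈ Finset.univ.filter (fun i => i < rb p), ℓ i) + ro p)
    (U : Matrix (Fin d) (Fin d) R)
    (hU0 : ∀ p q : Fin d, (p : ℕ) = 0 → U p q = S (cb q) (co q))
    (hU : ∀ p q : Fin d, (p : ℕ) ≠ 0 →
      U p q = if rb p = cb q then T (rb p) (ro p) (co q) else 0) :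
    (∀ i0 : Fin k, (m i0 = ℓ i0 + 1 ∧ ∀ j, j ≠ i0 → m j = ℓ j) →
      U.det = (-1) ^ (∑ i ∈ Finset.univ.filter (fun i => i < i0), ℓ i) *
        Matrix.det (Matrix.of fun p q : Fin (ℓ i0 + 1) =>
          if (p : ℕ) = 0 then S i0 (q : ℕ) else T i0 ((p : ℕ) - 1) (q : ℕ)) *
        ∏ i ∈ Finset.univ.erase i0, Matrix.det (Matrix.of fun r c : Fin (ℓ i) => T i r c)) ∧
    ((¬ ∃ i0 : Fin k, m i0 = ℓ i0 + 1 ∧ ∀ j, j ≠ i0 → m j = ℓ j) → U.det = 0) := by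
  obtain ⟨d, rfl⟩ : ∃ d', d = d' + 1 := ⟨_, hd1.symm.trans (add_comm _ _)⟩
  have hℓ : ∑ i, ℓ i = d := by omega
  have hrow' : IsBlockDecoding ℓ (fun r => rb r.succ) (fun r => ro r.succ) := fun r => by
    obtain ⟨hro, hr⟩ := hrow r.succ (by simp)
    rw [Fin.val_succ] at hr
    exact ⟨hro, by simp only [blockStart]; omega⟩
  have hU' : ∀ (r : Fin d) q,
      U r.succ q = if rb r.succ = cb q then T (rb r.succ) (ro r.succ) (co q) else 0 :=
    fun r q => hU _ _ (by simp)
  have hvanish : ∀ (r : Fin d) q, rb r.succ ≠ cb q → U r.succ q = 0 :=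
    fun r q h => by rw [hU', if_neg h]
  rw [det_eq_sum_det_updateRow_blockRow fun q => hU0 0 q rfl]
  constructor
  · rintro i₀ ⟨hmi₀, hmj⟩
    have hm : ∀ i, m i = ℓ i + if i = i₀ then 1 else 0 := fun i => by
      by_cases h : i = i₀ <;> simp [h, hmi₀, hmj]
    rw [sum_eq_single i₀ (fun j _ hj => det_updateRow_blockRow_eq_zero hcol hd2 hrow' hℓ hvanish
      (i := j) (by simp [hmj j hj])) (by simp)]
    exact det_updateRow_blockRow_self i₀ hm hcol hrow' hℓ hU'
  · intro hno
    refine sum_eq_zero fun j _ => ?_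
    push Not at hno
    obtain ⟨i, hi⟩ : ∃ i, m i ≠ ℓ i + if i = j then 1 else 0 := by
      by_cases h : m j = ℓ j + 1
      · obtain ⟨i, hij, hi⟩ := hno j h
        exact ⟨i, by simpa [hij] using hi⟩
      · exact ⟨j, by simpa using h⟩
    exact det_updateRow_blockRow_eq_zero hcol hd2 hrow' hℓ hvanish hi

/-- determinant of the block matrix `U_k` with top block row
`(S_1 | … | S_k)` (a single row) and block-diagonal `T_1, …, T_k` below.
Here `U : Matrix (Fin d) (Fin d) R`; the decoding functions `cb, co` (resp. `rb, ro`)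
give the block index and offset of each column (resp. of each row other than row `0`),
pinned down by the hypotheses `hcol` and `hrow`. -/
theorem det_blockMatrix_one_row {R : Type*} [CommRing R] (k d : ℕ) (hk : 1 ≤ k)
    (ℓ m : Fin k → ℕ) (hℓ : ∀ i, 1 ≤ ℓ i) (hm : ∀ i, 1 ≤ m i)
    (hd1 : 1 + ∑ i, ℓ i = d) (hd2 : ∑ i, m i = d)
    (S : Fin k → ℕ → R) (T : Fin k → ℕ → ℕ → R)
    (cb : Fin d → Fin k) (co : Fin d → ℕ)
    (rb : Fin d → Fin k) (ro : Fin d → ℕ)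
    (hcol : ∀ q : Fin d, co q < m (cb q) ∧
      (q : ℕ) = (∑ i ∈ Finset.univ.filter (fun i => i < cb q), m i) + co q)
    (hrow : ∀ p : Fin d, (p : ℕ) ≠ 0 → ro p < ℓ (rb p) ∧
      (p : ℕ) = 1 + (∑ i ∈ Finset.univ.filter (fun i => i < rb p), ℓ i) + ro p)
    (U : Matrix (Fin d) (Fin d) R)
    (hU0 : ∀ p q : Fin d, (p : ℕ) = 0 → U p q = S (cb q) (co q))
    (hU : ∀ p q : Fin d, (p : ℕ) ≠ 0 →
      U p q = if rb p = cb q then T (rb p) (ro p) (co q) else 0) :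
    (∀ i0 : Fin k, (m i0 = ℓ i0 + 1 ∧ ∀ j, j ≠ i0 → m j = ℓ j) →
      U.det = (-1) ^ (∑ i ∈ Finset.univ.filter (fun i => i < i0), ℓ i) *
        Matrix.det (Matrix.of fun p q : Fin (ℓ i0 + 1) =>
          if (p : ℕ) = 0 then S i0 (q : ℕ) else T i0 ((p : ℕ) - 1) (q : ℕ)) *
        ∏ i ∈ Finset.univ.erase i0, Matrix.det (Matrix.of fun r c : Fin (ℓ i) => T i r c)) ∧
    ((¬ ∃ i0 : Fin k, m i0 = ℓ i0 + 1 ∧ ∀ j, j ≠ i0 → m j = ℓ j) → U.det = 0) :=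
  det_blockMatrix_one_row_general k d ℓ m hd1 hd2 S T cb co rb ro hcol hrow U hU0 hU
end

section
/- For integers a ≥ b ≥ c ≥ 0 with a, b, c all even and with empty 2-core (which holds automatically in this parity case): the Schur polynomial satisfies s_{(a,b,c)}(x, -x, y) = s_{(a/2, c/2)}(x², y²) · s_{(b/2)}(x²). -/
/-- Schur polynomial in 3 variables via the bialternant formula
`det(v_i^{μ_j + 3 - j}) / det(v_i^{3 - j})` (1-indexed `j`). -/
noncomputable def schur3 {F : Type*} [Field F] (μ : Fin 3 → ℕ) (v : Fin 3 → F) : F :=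
  Matrix.det (Matrix.of fun i j : Fin 3 => v i ^ (μ j + (2 - (j : ℕ)))) /
    Matrix.det (Matrix.of fun i j : Fin 3 => v i ^ (2 - (j : ℕ)))

/-- Schur polynomial in 2 variables via the bialternant formula. -/
noncomputable def schur2 {F : Type*} [Field F] (μ : Fin 2 → ℕ) (v : Fin 2 → F) : F :=
  Matrix.det (Matrix.of fun i j : Fin 2 => v i ^ (μ j + (1 - (j : ℕ)))) /
    Matrix.det (Matrix.of fun i j : Fin 2 => v i ^ (1 - (j : ℕ)))

/-!
At `(x, -x, y)` the first two rows of the alternant `det (v_i ^ e_j)` with exponents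
`e = (a + 2, b + 1, c)` agree in the even columns and are opposite in the odd middle one, so
expanding after subtracting the first row from the second leaves `-2 x ^ (b + 1)` times the
alternant of `(x, y)` with exponents `(a + 2, c)`; the latter is the alternant of `(x², y²)` with
exponents `(a/2 + 1, c/2)`. The Vandermonde determinant, `e = (2, 1, 0)`, splits in the same way,
and the factors `-2 x` cancel.
-/

section Alternant

variable {R : Type*} [CommRing R]

def alternant {n : ℕ} (e : Fin n → ℕ) (v : Fin n → R) : R :=
  (Matrix.of fun i j => v i ^ e j).det

theorem alternant_comp_pow {n : ℕ} (e : Fin n → ℕ) (v : Fin n → R) (k : ℕ) :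
    alternant e (fun i => v i ^ k) = alternant (k • e) v := by
  simp only [alternant, Pi.smul_apply, smul_eq_mul, pow_mul]

theorem alternant_neg_pair {p q r : ℕ} (hp : Even p) (hq : Odd q) (hr : Even r) (x y : R) :
    alternant ![p, q, r] ![x, -x, y] = -2 * x ^ q * alternant ![p, r] ![x, y] := by
  simp only [alternant, Matrix.det_fin_three, Matrix.det_fin_two, Matrix.of_apply,
    Matrix.cons_val_zero, Matrix.cons_val_one, Matrix.cons_val, Matrix.cons_val_fin_one,
    hp.neg_pow, hq.neg_pow, hr.neg_pow]
  ring

end Alternant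

section Bialternant

variable {F : Type*} [Field F]

theorem schur3_eq_alternant_div (a b c : ℕ) (v : Fin 3 → F) :
    schur3 ![a, b, c] v = alternant ![a + 2, b + 1, c] v / alternant ![2, 1, 0] v := by
  unfold schur3 alternant
  congr 2 <;> ext i j <;> fin_cases j <;> rfl

theorem schur2_eq_alternant_div (a c : ℕ) (v : Fin 2 → F) :
    schur2 ![a, c] v = alternant ![a + 1, c] v / alternant ![1, 0] v := by
  unfold schur2 alternant
  congr 2 <;> ext i j <;> fin_cases j <;> rfl

end Bialternant

theorem schur_spec_even_general {F : Type*} [Field F] (x y : F) (h2 : (2 : F) ≠ 0)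
    (hx : x ≠ 0) (a b c : ℕ) (ha : Even a) (hb : Even b) (hc : Even c) :
    schur3 ![a, b, c] ![x, -x, y] =
      schur2 ![a / 2, c / 2] ![x ^ 2, y ^ 2] * (x ^ 2) ^ (b / 2) := by
  obtain ⟨a, rfl⟩ := ha.two_dvd
  obtain ⟨b, rfl⟩ := hb.two_dvd
  obtain ⟨c, rfl⟩ := hc.two_dvd
  have hsq : ![x ^ 2, y ^ 2] = fun i => ![x, y] i ^ 2 := by
    ext i; fin_cases i <;> rfl
  rw [schur3_eq_alternant_div, schur2_eq_alternant_div, hsq, alternant_comp_pow,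
    alternant_comp_pow,
    alternant_neg_pair ((even_two_mul a).add even_two) (odd_two_mul_add_one b) (even_two_mul c),
    alternant_neg_pair even_two odd_one Even.zero]
  simp only [Matrix.smul_cons, smul_eq_mul, Matrix.smul_empty, Nat.mul_div_cancel_left _ two_pos,
    mul_add_one, mul_one, mul_zero, pow_one]
  set P := alternant ![2 * a + 2, 2 * c] ![x, y]
  set Q := alternant ![2, 0] ![x, y]
  have hx2 : -2 * x ≠ 0 := mul_ne_zero (neg_ne_zero.mpr h2) hx
  calc -2 * x ^ (2 * b + 1) * P / (-2 * x * Q) = -2 * x * (P * (x ^ 2) ^ b) / (-2 * x * Q) := by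
        ring
    _ = P / Q * (x ^ 2) ^ b := by rw [mul_div_mul_left _ _ hx2, div_mul_eq_mul_div]

/-- for `a ≥ b ≥ c ≥ 0` all even (empty 2-core),
`s_{(a,b,c)}(x,-x,y) = s_{(a/2,c/2)}(x²,y²) · s_{(b/2)}(x²)`. -/
theorem schur_spec_even {F : Type*} [Field F] (x y : F) (h2 : (2 : F) ≠ 0)
    (hx : x ≠ 0) (hxy : x ≠ y) (hxy' : x ≠ -y)
    (a b c : ℕ) (hab : b ≤ a) (hbc : c ≤ b)
    (ha : Even a) (hb : Even b) (hc : Even c) :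
    schur3 ![a, b, c] ![x, -x, y] =
      schur2 ![a / 2, c / 2] ![x ^ 2, y ^ 2] * (x ^ 2) ^ (b / 2) :=
  schur_spec_even_general x y h2 hx a b c ha hb hc
end

section
/- For integers a ≥ b ≥ c ≥ 0 with a odd and b, c even (so the 2-core of (a,b,c) is (1)): s_{(a,b,c)}(x, -x, y) = y · s_{((a-1)/2, b/2)}(x², y²) · s_{(c/2)}(x²). -/
section

variable {F : Type*} [Field F]

theorem schur2_eq (μ : Fin 2 → ℕ) (u w : F) :
    schur2 μ ![u, w] = (u ^ (μ 0 + 1) * w ^ μ 1 - u ^ μ 1 * w ^ (μ 0 + 1)) / (u - w) := by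
  simp [schur2, Matrix.det_fin_two]

theorem det_pow_x_neg_x_y_of_odd_odd_even (x y : F) {p q r : ℕ}
    (hp : Odd p) (hq : Odd q) (hr : Even r) :
    Matrix.det (Matrix.of fun i j : Fin 3 => ![x, -x, y] i ^ ![p, q, r] j) =
      -(2 * x ^ r) * (x ^ p * y ^ q - x ^ q * y ^ p) := by
  simp only [Matrix.det_fin_three, Matrix.of_apply, Matrix.cons_val, hp.neg_pow, hq.neg_pow,
    hr.neg_pow]
  ring

theorem det_vandermonde_x_neg_x_y (x y : F) :
    Matrix.det (Matrix.of fun i j : Fin 3 => ![x, -x, y] i ^ (2 - (j : ℕ))) =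
      -(2 * x) * (x ^ 2 - y ^ 2) := by
  simp only [Matrix.det_fin_three, Matrix.of_apply, Matrix.cons_val, Fin.val_zero, Fin.val_one,
    Fin.val_two]
  ring

theorem schur3_x_neg_x_y {x : F} (y : F) (h2 : (2 : F) ≠ 0) (hx : x ≠ 0) {a b c : ℕ}
    (ha : Odd a) (hb : Even b) (hc : Even c) :
    schur3 ![a, b, c] ![x, -x, y] =
      y * x ^ c * (x ^ (a + 1) * y ^ b - x ^ b * y ^ (a + 1)) / (x ^ 2 - y ^ 2) := by
  have hexp : (Matrix.of fun i j : Fin 3 => ![x, -x, y] i ^ (![a, b, c] j + (2 - (j : ℕ)))) =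
      Matrix.of fun i j => ![x, -x, y] i ^ ![a + 2, b + 1, c] j := by
    ext i j; fin_cases j <;> rfl
  have hnum := det_pow_x_neg_x_y_of_odd_odd_even x y (ha.add_even even_two) hb.add_one hc
  rw [schur3, hexp, hnum, det_vandermonde_x_neg_x_y,
    ← mul_div_mul_left _ (x ^ 2 - y ^ 2) (neg_ne_zero.2 (mul_ne_zero h2 hx))]
  ring

end

theorem schur_spec_odd_even_even_general {F : Type*} [Field F] (x y : F) (h2 : (2 : F) ≠ 0)
    (hx : x ≠ 0)
    (a b c : ℕ)
    (ha : Odd a) (hb : Even b) (hc : Even c) :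
    schur3 ![a, b, c] ![x, -x, y] =
      y * schur2 ![(a - 1) / 2, b / 2] ![x ^ 2, y ^ 2] * (x ^ 2) ^ (c / 2) := by
  rw [schur3_x_neg_x_y y h2 hx ha hb hc, schur2_eq]
  obtain ⟨A, rfl⟩ := ha
  obtain ⟨B, rfl⟩ := hb
  obtain ⟨C, rfl⟩ := hc
  simp only [Matrix.cons_val_zero, Matrix.cons_val_one,
    show (2 * A + 1 - 1) / 2 = A by omega,
    show (B + B) / 2 = B by omega, show (C + C) / 2 = C by omega]
  ring

/-- for `a ≥ b ≥ c ≥ 0` with `a` odd and `b, c` even (2-core `(1)`),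
`s_{(a,b,c)}(x,-x,y) = y · s_{((a-1)/2, b/2)}(x²,y²) · s_{(c/2)}(x²)`. -/
theorem schur_spec_odd_even_even {F : Type*} [Field F] (x y : F) (h2 : (2 : F) ≠ 0)
    (hx : x ≠ 0) (hxy : x ≠ y) (hxy' : x ≠ -y)
    (a b c : ℕ) (hab : b ≤ a) (hbc : c ≤ b)
    (ha : Odd a) (hb : Even b) (hc : Even c) :
    schur3 ![a, b, c] ![x, -x, y] =
      y * schur2 ![(a - 1) / 2, b / 2] ![x ^ 2, y ^ 2] * (x ^ 2) ^ (c / 2) :=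
  schur_spec_odd_even_even_general x y h2 hx a b c ha hb hc
end

section
/- For a partition λ = (λ_1,...,λ_n) of length at most n, the even orthogonal character satisfies oe_{(λ_1+1/2,...,λ_n+1/2)}(x_1,...,x_n) = (-1)^{∑λ_i} ∏_{i=1}^n (x_i^{1/2} + x̄_i^{1/2}) · oo_λ(-x_1,...,-x_n), where oo is the odd orthogonal character. -/
/-!
With `x_i = u_i²`, the identity `(I u)^(2m+1) - (I u)⁻¹^(2m+1) = (-1)^m I (u^(2m+1) + u⁻¹^(2m+1))`
turns both odd orthogonal determinants at `-x` into determinants of `u^(2m+1) + u⁻¹^(2m+1)`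
with columns scaled by `(-1)^m I`; in the quotient only the sign `(-1)^(∑ λ)` survives.
What remains is the Weyl denominator identity
`∏ (u_i + u_i⁻¹) · det (u_i^(2(n-j)) + u_i⁻¹^(2(n-j))) = 2 · det (u_i^(2(n-j)+1) + u_i⁻¹^(2(n-j)+1))`:
by `(u + u⁻¹)(u^(k+2) + u⁻¹^(k+2)) = (u^(k+3) + u⁻¹^(k+3)) + (u^(k+1) + u⁻¹^(k+1))` the left matrix
is the right one times a lower bidiagonal matrix with determinant `2`.
-/

open Matrix Finset

section BidiagonalFactor

variable {R : Type*} [CommRing R] {n : ℕ}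

def addNextColumn (n : ℕ) : Matrix (Fin (n + 1)) (Fin (n + 1)) R :=
  diagonal (fun j => if j = Fin.last n then 2 else 1) +
    of fun l j : Fin (n + 1) => if (l : ℕ) = j + 1 then 1 else 0

lemma det_addNextColumn : det (addNextColumn n : Matrix _ _ R) = 2 := by
  rw [det_of_isLowerTriangular _ ?_]
  · simp [addNextColumn]
  · intro l j (hlj : (l : ℕ) < j)
    simp [addNextColumn, Fin.ne_of_lt hlj, show (l : ℕ) ≠ j + 1 by omega]

variable (B : Matrix (Fin (n + 1)) (Fin (n + 1)) R) (i : Fin (n + 1))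

lemma mul_addNextColumn_apply_castSucc (j : Fin n) :
    (B * addNextColumn n : Matrix _ _ R) i j.castSucc = B i j.castSucc + B i j.succ := by
  have hsucc (l : Fin (n + 1)) : (l : ℕ) = j + 1 ↔ l = j.succ := by rw [Fin.ext_iff, Fin.val_succ]
  rw [addNextColumn, Matrix.mul_add, Matrix.add_apply, mul_diagonal, mul_apply]
  simp only [of_apply, mul_ite, mul_one, mul_zero, Fin.val_castSucc, hsucc, Fin.castSucc_ne_last,
    if_false, sum_ite_eq', mem_univ, if_true]

lemma mul_addNextColumn_apply_last :
    (B * addNextColumn n : Matrix _ _ R) i (Fin.last n) = 2 * B i (Fin.last n) := by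
  rw [addNextColumn, Matrix.mul_add, Matrix.add_apply, mul_diagonal, mul_apply]
  simp only [of_apply, mul_ite, mul_one, mul_zero, if_true]
  rw [sum_eq_zero fun l _ => if_neg (by simp; omega)]
  ring

end BidiagonalFactor

section Field

variable {F : Type*} [Field F]

-- The exponents are at least `1` so that this also holds at `u = 0`, where `0⁻¹ = 0`.
lemma add_inv_mul_pow_add_inv_pow (u : F) (k : ℕ) :
    (u + u⁻¹) * (u ^ (k + 2) + u⁻¹ ^ (k + 2)) =
      (u ^ (k + 3) + u⁻¹ ^ (k + 3)) + (u ^ (k + 1) + u⁻¹ ^ (k + 1)) := by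
  have h : u⁻¹ * u * u⁻¹ = u⁻¹ := by simpa only [inv_inv] using mul_inv_mul_cancel u⁻¹
  linear_combination u⁻¹ ^ k * h + u ^ k * mul_self_mul_inv u

lemma prod_add_inv_mul_det_pow_even {n : ℕ} (u : Fin (n + 1) → F) :
    (∏ i, (u i + (u i)⁻¹)) *
        det (of fun i j : Fin (n + 1) => u i ^ (2 * (n - j)) + (u i)⁻¹ ^ (2 * (n - j))) =
      2 * det (of fun i j : Fin (n + 1) =>
        u i ^ (2 * (n - j) + 1) + (u i)⁻¹ ^ (2 * (n - j) + 1)) := by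
  rw [← det_mul_column, mul_comm, ← det_addNextColumn (R := F) (n := n), ← det_mul]
  congr 1
  ext i j
  rcases Fin.eq_castSucc_or_eq_last j with ⟨j, rfl⟩ | rfl
  · have h₁ : 2 * (n - j) = 2 * (n - (j + 1)) + 2 := by omega
    rw [mul_addNextColumn_apply_castSucc]
    simp only [of_apply, Fin.val_castSucc, Fin.val_succ, h₁]
    exact add_inv_mul_pow_add_inv_pow _ _
  · rw [mul_addNextColumn_apply_last]
    simp only [of_apply, Fin.val_last, Nat.sub_self]
    ring

lemma mul_pow_odd_sub_inv_pow_odd {I : F} (hI : I ^ 2 = -1) (u : F) (m : ℕ) :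
    (I * u) ^ (2 * m + 1) - (I * u)⁻¹ ^ (2 * m + 1) =
      (-1) ^ m * I * (u ^ (2 * m + 1) + u⁻¹ ^ (2 * m + 1)) := by
  have hinv : I⁻¹ = -I := inv_eq_of_mul_eq_one_right (by linear_combination -hI)
  rw [mul_inv, hinv, mul_pow, mul_pow, Odd.neg_pow ⟨m, rfl⟩, pow_succ, pow_mul, hI]
  ring

lemma det_mul_pow_odd_sub_inv_pow_odd {ι : Type*} [Fintype ι] [DecidableEq ι] {I : F}
    (hI : I ^ 2 = -1) (u : ι → F) (e : ι → ℕ) :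
    det (of fun i j => (I * u i) ^ (2 * e j + 1) - (I * u i)⁻¹ ^ (2 * e j + 1)) =
      (-1) ^ (∑ j, e j) * I ^ Fintype.card ι *
        det (of fun i j => u i ^ (2 * e j + 1) + (u i)⁻¹ ^ (2 * e j + 1)) := by
  simp only [mul_pow_odd_sub_inv_pow_odd hI]
  refine (det_mul_row (fun j => (-1) ^ e j * I)
    (of fun i j => u i ^ (2 * e j + 1) + (u i)⁻¹ ^ (2 * e j + 1))).trans ?_
  rw [prod_mul_distrib, prod_pow_eq_pow_sum, prod_const, card_univ]

end Field

/-- Half-integer powers are taken through the chosen square roots `u i` of `x i`, so that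
`x_i^(m+1/2) = u_i^(2m+1)`, and `I * u i` is the square root of `-x i`. -/
theorem oe_halfShift_eq_oo_neg_general {F : Type*} [Field F] (n : ℕ) (hn : 1 ≤ n)
    (lam : Fin n → ℕ)
    (x u : Fin n → F) (hu : ∀ i, u i ^ 2 = x i)
    (I : F) (hI : I ^ 2 = -1)
    (hden1 : Matrix.det (Matrix.of fun i j : Fin n =>
        x i ^ (n - 1 - (j : ℕ)) + (x i)⁻¹ ^ (n - 1 - (j : ℕ))) ≠ 0)
    (hden2 : Matrix.det (Matrix.of fun i j : Fin n =>
        (I * u i) ^ (2 * (n - 1 - (j : ℕ)) + 1) -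
          ((I * u i)⁻¹) ^ (2 * (n - 1 - (j : ℕ)) + 1)) ≠ 0) :
    2 * Matrix.det (Matrix.of fun i j : Fin n =>
        u i ^ (2 * (lam j + (n - 1 - (j : ℕ))) + 1) +
          ((u i)⁻¹) ^ (2 * (lam j + (n - 1 - (j : ℕ))) + 1)) /
      Matrix.det (Matrix.of fun i j : Fin n =>
        x i ^ (n - 1 - (j : ℕ)) + (x i)⁻¹ ^ (n - 1 - (j : ℕ))) =
    (-1 : F) ^ (∑ i, lam i) * (∏ i, (u i + (u i)⁻¹)) *
      (Matrix.det (Matrix.of fun i j : Fin n =>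
          (I * u i) ^ (2 * (lam j + (n - 1 - (j : ℕ))) + 1) -
            ((I * u i)⁻¹) ^ (2 * (lam j + (n - 1 - (j : ℕ))) + 1)) /
        Matrix.det (Matrix.of fun i j : Fin n =>
          (I * u i) ^ (2 * (n - 1 - (j : ℕ)) + 1) -
            ((I * u i)⁻¹) ^ (2 * (n - 1 - (j : ℕ)) + 1))) := by
  obtain rfl : x = fun i => u i ^ 2 := funext fun i => (hu i).symm
  obtain ⟨n, rfl⟩ : ∃ m, n = m + 1 := ⟨n - 1, by omega⟩
  simp only [Nat.add_sub_cancel, ← inv_pow, ← pow_mul, det_mul_pow_odd_sub_inv_pow_odd hI,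
    Fintype.card_fin] at hden1 hden2 ⊢
  rw [sum_add_distrib, pow_add]
  have hshift := prod_add_inv_mul_det_pow_even u
  generalize det (of fun i j : Fin (n + 1) =>
    u i ^ (2 * (lam j + (n - j)) + 1) + (u i)⁻¹ ^ (2 * (lam j + (n - j)) + 1)) = A
  generalize det (of fun i j : Fin (n + 1) =>
    u i ^ (2 * (n - j) + 1) + (u i)⁻¹ ^ (2 * (n - j) + 1)) = A₀ at hden2 hshift ⊢
  generalize det (of fun i j : Fin (n + 1) =>
    u i ^ (2 * (n - j)) + (u i)⁻¹ ^ (2 * (n - j))) = D at hden1 hshift ⊢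
  generalize ∏ i, (u i + (u i)⁻¹) = P at hshift ⊢
  have hA₀ : A₀ ≠ 0 := right_ne_zero_of_mul hden2
  have hI₀ : I ≠ 0 := by rintro rfl; norm_num at hI
  have hsign : (-1 : F) ^ (∑ i, lam i) * (-1) ^ (∑ i, lam i) = 1 := by
    rw [← pow_add, Even.neg_one_pow ⟨_, rfl⟩]
  calc 2 * A / D = P * (A / A₀) := by
        field_simp
        linear_combination -A * hshift
    _ = _ := by
        field_simp
        linear_combination -P * A * hsign

/-- `oe_{(λ_1+1/2,…,λ_n+1/2)}(x) = (-1)^{Σλ_i} ∏(x_i^{1/2}+x̄_i^{1/2}) ·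
oo_λ(-x)`.  Half-integer powers are interpreted via chosen square roots `u i` of `x i`
(so `x_i^{m+1/2} = u_i^{2m+1}`), and the square roots of `-x_i` are `I · u_i` where
`I² = -1`.  Both characters are written via the Weyl determinant formulas; the
determinants in the denominators are assumed nonzero. -/
theorem oe_halfShift_eq_oo_neg {F : Type*} [Field F] (n : ℕ) (hn : 1 ≤ n)
    (lam : Fin n → ℕ) (hlam : Antitone lam)
    (x u : Fin n → F) (hu : ∀ i, u i ^ 2 = x i) (hx : ∀ i, x i ≠ 0)
    (I : F) (hI : I ^ 2 = -1)
    (hden1 : Matrix.det (Matrix.of fun i j : Fin n =>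
        x i ^ (n - 1 - (j : ℕ)) + (x i)⁻¹ ^ (n - 1 - (j : ℕ))) ≠ 0)
    (hden2 : Matrix.det (Matrix.of fun i j : Fin n =>
        (I * u i) ^ (2 * (n - 1 - (j : ℕ)) + 1) -
          ((I * u i)⁻¹) ^ (2 * (n - 1 - (j : ℕ)) + 1)) ≠ 0) :
    2 * Matrix.det (Matrix.of fun i j : Fin n =>
        u i ^ (2 * (lam j + (n - 1 - (j : ℕ))) + 1) +
          ((u i)⁻¹) ^ (2 * (lam j + (n - 1 - (j : ℕ))) + 1)) /
      Matrix.det (Matrix.of fun i j : Fin n =>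
        x i ^ (n - 1 - (j : ℕ)) + (x i)⁻¹ ^ (n - 1 - (j : ℕ))) =
    (-1 : F) ^ (∑ i, lam i) * (∏ i, (u i + (u i)⁻¹)) *
      (Matrix.det (Matrix.of fun i j : Fin n =>
          (I * u i) ^ (2 * (lam j + (n - 1 - (j : ℕ))) + 1) -
            ((I * u i)⁻¹) ^ (2 * (lam j + (n - 1 - (j : ℕ))) + 1)) /
        Matrix.det (Matrix.of fun i j : Fin n =>
          (I * u i) ^ (2 * (n - 1 - (j : ℕ)) + 1) -
            ((I * u i)⁻¹) ^ (2 * (n - 1 - (j : ℕ)) + 1))) :=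
  oe_halfShift_eq_oo_neg_general n hn lam x u hu I hI hden1 hden2
end
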